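/- arXiv:2509.11384 — 9 statements merged into one kernel-verified Lean document; each statement's English description precedes it below -/
import Mathlib

section
/- With f_n(k;j) and g_n(k) as in the butterfly-tree recursion, g_n(k) = 0 whenever k > ⌊n/2⌋; that is, the Horton–Strahler number of a simple butterfly tree with 2^n nodes is at most ⌊n/2⌋. -/
theorem butterfly_HS_support
    (f0 f1 : ℕ → ℕ → ℕ)
    (hf00 : f0 0 0 = 1) (hf0k : ∀ k, 0 < k → f0 0 k = 0)
    (hf10 : ∀ k, f1 0 k = 0)
    (hrec0 : ∀ n k, f0 (n + 1) (k + 1) = f1 n k)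
    (hrec0' : ∀ n, f0 (n + 1) 0 = 0)
    (hrec1 : ∀ n k, f1 (n + 1) k = 2 * f0 n k + f1 n k) :
    ∀ n k : ℕ, n / 2 < k → f0 n k + f1 n k = 0 := by
  have key : ∀ n k, (n < 2 * k → f0 n k = 0) ∧ (n < 2 * k + 1 → f1 n k = 0) := by
    intro n
    induction n with
    | zero =>
      intro k
      constructor
      · intro h; exact hf0k k (by omega)
      · intro _; exact hf10 k
    | succ n ih =>
      intro k
      constructor
      · intro h
        match k with
        | 0 => omega
        | k + 1 =>
          rw [hrec0 n k]
          exact (ih k).2 (by omega)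
      · intro h
        rw [hrec1 n k, (ih k).1 (by omega), (ih k).2 (by omega)]
  intro n k h
  rw [(key n k).1 (by omega), (key n k).2 (by omega)]
end

section
/- Define polynomials F_n(x) over ℚ by F_0 = 0, F_1 = 2, and F_{n+1}(x) = 2x·F_{n-1}(x) + F_n(x). Then for all n ≥ 1, the degree of F_n is ⌊(n-1)/2⌋ and all coefficients of F_n are nonnegative (with F_n(0) = 2). -/
open Polynomial

theorem butterfly_F_degree_and_nonneg
    (F : ℕ → Polynomial ℚ)
    (hF0 : F 0 = 0) (hF1 : F 1 = 2)
    (hrec : ∀ n : ℕ, F (n + 2) = 2 * X * F n + F (n + 1)) :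
    ∀ n : ℕ, 1 ≤ n →
      (F n).natDegree = (n - 1) / 2 ∧ (∀ i : ℕ, 0 ≤ (F n).coeff i) ∧ (F n).eval 0 = 2 := by
  set P : ℕ → Prop := fun n =>
    (F n).natDegree = (n - 1) / 2 ∧ (∀ i : ℕ, 0 ≤ (F n).coeff i) ∧ (F n).eval 0 = 2 with hP
  have h2 : F 2 = 2 := by
    have := hrec 0
    simp [hF0, hF1] at this
    simpa using this
  have base : ∀ m, m = 1 ∨ m = 2 → P m := by
    rintro m (rfl | rfl)
    · refine ⟨?_, ?_, ?_⟩ <;> simp [hF1]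
      · intro i
        rcases Nat.eq_zero_or_pos i with rfl | hi
        · norm_num
        · rw [(map_ofNat C 2).symm, coeff_C, if_neg (by omega)]
    · refine ⟨?_, ?_, ?_⟩ <;> simp [h2]
      · intro i
        rcases Nat.eq_zero_or_pos i with rfl | hi
        · norm_num
        · rw [(map_ofNat C 2).symm, coeff_C, if_neg (by omega)]
  have key : ∀ n, P (n + 1) ∧ P (n + 2) := by
    intro n
    induction n with
    | zero => exact ⟨base 1 (Or.inl rfl), base 2 (Or.inr rfl)⟩
    | succ k ih =>
      refine ⟨ih.2, ?_⟩
      obtain ⟨⟨hd1, hc1, he1⟩, ⟨hd2, hc2, he2⟩⟩ := ih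
      have hrec' := hrec (k + 1)
      have hF1ne : F (k + 1) ≠ 0 := by
        intro h; rw [h] at he1; simp at he1
      have hcoeff : ∀ i, (F (k + 3)).coeff i =
          2 * (F (k + 1)).coeff (i - 1) * (if i = 0 then 0 else 1) + (F (k + 2)).coeff i := by
        intro i
        rw [show k + 3 = (k + 1) + 2 by ring, hrec']
        rcases Nat.eq_zero_or_pos i with rfl | hi
        · simp [coeff_zero_eq_eval_zero, he1]
        · obtain ⟨j, rfl⟩ := Nat.exists_eq_add_of_le hi
          rw [coeff_add, mul_assoc, (map_ofNat C 2).symm, coeff_C_mul]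
          simp [coeff_X_mul, Nat.add_comm 1 j]
      -- target degree
      set d := (k + 2) / 2 with hdd
      have hd1' : (F (k + 1)).natDegree = k / 2 := by simpa using hd1
      have hd2' : (F (k + 2)).natDegree = (k + 1) / 2 := by simpa using hd2
      have hlead : 0 < (F (k + 1)).coeff (k / 2) := by
        have hne : (F (k + 1)).coeff (k / 2) ≠ 0 := by
          rw [← hd1', Polynomial.coeff_natDegree]
          exact Polynomial.leadingCoeff_ne_zero.mpr hF1ne
        exact lt_of_le_of_ne (hc1 _) (Ne.symm hne)
      have hcpos : 0 < (F (k + 3)).coeff d := by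
        rw [hcoeff]
        have hd0 : d ≠ 0 := by omega
        rw [if_neg hd0]
        have : d - 1 = k / 2 := by omega
        rw [this]
        have h2le : (F (k + 2)).natDegree ≤ d ∨ True := Or.inr trivial
        have : 0 ≤ (F (k + 2)).coeff d := hc2 d
        nlinarith [hlead]
      have hnonneg : ∀ i, 0 ≤ (F (k + 3)).coeff i := by
        intro i
        rw [hcoeff]
        have := hc1 (i - 1); have := hc2 i
        split <;> nlinarith
      have hzero : ∀ i, d < i → (F (k + 3)).coeff i = 0 := by
        intro i hi
        rw [hcoeff]
        have h1z : (F (k + 1)).coeff (i - 1) = 0 := by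
          apply coeff_eq_zero_of_natDegree_lt
          rw [hd1']; omega
        have h2z : (F (k + 2)).coeff i = 0 := by
          apply coeff_eq_zero_of_natDegree_lt
          rw [hd2']; omega
        simp [h1z, h2z]
      refine ⟨?_, hnonneg, ?_⟩
      · have hle : (F (k + 3)).natDegree ≤ d :=
          natDegree_le_iff_coeff_eq_zero.mpr fun m hm => hzero m hm
        have hge : d ≤ (F (k + 3)).natDegree := le_natDegree_of_ne_zero (ne_of_gt hcpos)
        have : (F (k + 3)).natDegree = d := le_antisymm hle hge
        rw [this]; omega
      · rw [show k + 3 = (k + 1) + 2 by ring, hrec']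
        simp [he1, he2]
  intro n hn
  obtain ⟨m, rfl⟩ := Nat.exists_eq_add_of_le hn
  simpa [Nat.add_comm, hP] using (key m).1
end

section
/- Let F_n(x) be defined by F_0 = 0, F_1 = 2, F_{n+1}(x) = 2x·F_{n-1}(x) + F_n(x), and define G_n(x) = 2^{-n}·(x·F_{n-1}(x) + F_n(x)) for n ≥ 1 with G_0(x) = 1. Then G_{n+1}(x) = G_n(x) + (x-1)/2^{n+1} · F_n(x) for all n ≥ 0, and consequently G_n(x) = 1 + (x-1)/2 · Σ_{k=0}^{n-1} 2^{-k} F_k(x). -/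
open Polynomial

theorem butterfly_pgf_recursion
    (F G : ℕ → Polynomial ℚ)
    (hF0 : F 0 = 0) (hF1 : F 1 = 2)
    (hFrec : ∀ n : ℕ, F (n + 2) = 2 * X * F n + F (n + 1))
    (hG0 : G 0 = 1)
    (hG : ∀ n : ℕ, G (n + 1) = C (((2 : ℚ) ^ (n + 1))⁻¹) * (X * F n + F (n + 1))) :
    (∀ n : ℕ, G (n + 1) = G n + C (((2 : ℚ) ^ (n + 1))⁻¹) * (X - 1) * F n) ∧
    (∀ n : ℕ, G n =
        1 + C (1 / 2 : ℚ) * (X - 1) * ∑ k ∈ Finset.range n, C (((2 : ℚ) ^ k)⁻¹) * F k) := by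
  have key : ∀ n : ℕ, G (n + 1) = G n + C (((2 : ℚ) ^ (n + 1))⁻¹) * (X - 1) * F n := by
    intro n
    cases n with
    | zero =>
      rw [hG 0, hG0, hF0, hF1]
      have h2 : (C (2 : ℚ) : Polynomial ℚ) = 2 := map_ofNat C 2
      rw [← h2]
      simp [← C_mul]
    | succ m =>
      rw [hG (m + 1), hG m, hFrec m]
      have h2 : (C (((2 : ℚ) ^ (m + 1))⁻¹) : Polynomial ℚ)
          = C (((2 : ℚ) ^ (m + 1 + 1))⁻¹) * 2 := by
        have : ((2 : ℚ) ^ (m + 1))⁻¹ = ((2 : ℚ) ^ (m + 1 + 1))⁻¹ * 2 := by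
          rw [pow_succ]; field_simp; ring
        rw [this, C_mul, map_ofNat]
      rw [h2]; ring
  refine ⟨key, ?_⟩
  intro n
  induction n with
  | zero => simp [hG0]
  | succ n ih =>
    rw [key n, ih, Finset.sum_range_succ]
    have h2 : (C (((2 : ℚ) ^ (n + 1))⁻¹) : Polynomial ℚ)
        = C (1 / 2 : ℚ) * C (((2 : ℚ) ^ n)⁻¹) := by
      rw [← C_mul]
      congr 1
      rw [pow_succ]
      field_simp
    rw [h2]; ring
end

section
/- For all natural numbers n and all k with 0 ≤ k ≤ ⌊n/2⌋, the count g_n(k) of simple butterfly trees with 2^n nodes and Horton–Strahler number k satisfies (for n ≥ 1) g_n(k) = 2^k · (C(n−k, k) + C(n−k−1, k)), where C denotes the binomial coefficient and C(a,b)=0 if a<b or a<0. -/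
theorem butterfly_pmf_closed_form
    (f0 f1 : ℕ → ℕ → ℕ)
    (hf00 : f0 0 0 = 1) (hf0k : ∀ k, 0 < k → f0 0 k = 0)
    (hf10 : ∀ k, f1 0 k = 0)
    (hrec0 : ∀ n k, f0 (n + 1) (k + 1) = f1 n k)
    (hrec0' : ∀ n, f0 (n + 1) 0 = 0)
    (hrec1 : ∀ n k, f1 (n + 1) k = 2 * f0 n k + f1 n k) :
    ∀ n k : ℕ, 1 ≤ n → k ≤ n / 2 →
      f0 n k + f1 n k = 2 ^ k * (Nat.choose (n - k) k + Nat.choose (n - k - 1) k) := by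
  have hf1 : ∀ n k, f1 (n + 1) k = 2 ^ (k + 1) * Nat.choose (n - k) k := by
    intro n
    induction n using Nat.strong_induction_on with
    | _ n IH =>
      match n with
      | 0 =>
        intro k
        rw [hrec1]
        match k with
        | 0 => simp [hf00, hf10]
        | k + 1 =>
          rw [hf0k (k + 1) (by omega), hf10]
          have : (0 - (k + 1)).choose (k + 1) = 0 :=
            Nat.choose_eq_zero_of_lt (by omega)
          rw [this]; ring
      | n + 1 =>
        intro k
        rw [hrec1]
        match k with
        | 0 =>
          rw [hrec0', IH n (by omega) 0]
          simp
        | k + 1 =>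
          rw [hrec0 n k]
          match n with
          | 0 =>
            rw [hf10, IH 0 (by omega) (k + 1)]
            have h1 : (0 - (k + 1)).choose (k + 1) = 0 :=
              Nat.choose_eq_zero_of_lt (by omega)
            have h2 : (0 + 1 - (k + 1)).choose (k + 1) = 0 :=
              Nat.choose_eq_zero_of_lt (by omega)
            rw [h1, h2]; ring
          | n + 1 =>
            rw [IH n (by omega) k, IH (n + 1) (by omega) (k + 1)]
            rcases le_or_gt k n with h | h
            · have h1 : n + 1 - (k + 1) = n - k := by omega
              have h2 : n + 1 + 1 - (k + 1) = (n - k) + 1 := by omega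
              rw [h1, h2, Nat.choose_succ_succ]
              ring
            · have h1 : (n - k).choose k = 0 := by
                match k with
                | 0 => omega
                | k + 1 => exact Nat.choose_eq_zero_of_lt (by omega)
              have h2 : (n + 1 - (k + 1)).choose (k + 1) = 0 :=
                Nat.choose_eq_zero_of_lt (by omega)
              have h3 : (n + 1 + 1 - (k + 1)).choose (k + 1) = 0 :=
                Nat.choose_eq_zero_of_lt (by omega)
              rw [h1, h2, h3]; ring
  intro n k hn hk
  match n, hn with
  | n + 1, _ =>
    match k with
    | 0 =>
      rw [hrec0', hf1 n 0]
      simp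
    | k + 1 =>
      have hm : k + 1 ≤ (n + 1) / 2 := hk
      have hn2 : 2 * k + 1 ≤ n := by omega
      match n, hn2 with
      | n + 1, _ =>
        have hk' : k ≤ n := by omega
        rw [hrec0 (n + 1) k, hf1 n k, hf1 (n + 1) (k + 1)]
        have h1 : n + 1 - (k + 1) = n - k := by omega
        have h2 : n + 1 + 1 - (k + 1) = (n - k) + 1 := by omega
        have h3 : n - k + 1 - 1 = n - k := by omega
        rw [h1, h2, h3, Nat.choose_succ_succ]
        ring
end

section
/- For every natural number n ≥ 1, 2^n = Σ_{k=0}^{⌊n/2⌋} 2^k · (C(n−k, k) + C(n−k−1, k)), where C denotes the binomial coefficient with C(a,b)=0 when b>a. -/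
private def F (n : ℕ) : ℕ := ∑ k ∈ Finset.range (n + 1), 2 ^ k * Nat.choose (n - k) k

private lemma F_rec (n : ℕ) : F (n + 2) = F (n + 1) + 2 * F n := by
  have h1 : F (n + 2) =
      (∑ k ∈ Finset.range (n + 2), 2 ^ (k + 1) * Nat.choose (n + 1 - k) (k + 1)) + 1 := by
    rw [F, Finset.sum_range_succ' (fun k => 2 ^ k * Nat.choose (n + 2 - k) k)]
    simp [Nat.succ_sub_succ]
  have h2 : ∀ k ∈ Finset.range (n + 2),
      2 ^ (k + 1) * Nat.choose (n + 1 - k) (k + 1) =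
      2 ^ (k + 1) * Nat.choose (n - k) k + 2 ^ (k + 1) * Nat.choose (n - k) (k + 1) := by
    intro k hk
    rcases le_or_gt k n with h | h
    · have : n + 1 - k = (n - k) + 1 := by omega
      rw [this, Nat.choose_succ_succ', Nat.mul_add]
    · have hk' : k = n + 1 := by simp at hk; omega
      subst hk'
      simp [Nat.choose_eq_zero_of_lt]
  rw [h1, Finset.sum_congr rfl h2, Finset.sum_add_distrib]
  have hA : (∑ k ∈ Finset.range (n + 2), 2 ^ (k + 1) * Nat.choose (n - k) k) = 2 * F n := by
    rw [Finset.sum_range_succ]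
    have : n - (n + 1) = 0 := by omega
    rw [this, Nat.choose_eq_zero_of_lt (by omega), Nat.mul_zero, Nat.add_zero, F,
      Finset.mul_sum]
    apply Finset.sum_congr rfl
    intro k _; ring
  have hB : (∑ k ∈ Finset.range (n + 2), 2 ^ (k + 1) * Nat.choose (n - k) (k + 1)) + 1
      = F (n + 1) := by
    rw [Finset.sum_range_succ]
    have h0 : n - (n + 1) = 0 := by omega
    rw [h0, Nat.choose_eq_zero_of_lt (by omega), Nat.mul_zero, Nat.add_zero, F,
      Finset.sum_range_succ' (fun k => 2 ^ k * Nat.choose (n + 1 - k) k)]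
    simp [Nat.succ_sub_succ]
  omega

private lemma F_add (n : ℕ) : F (n + 1) + F n = 2 ^ (n + 1) := by
  induction n with
  | zero => simp [F]; decide
  | succ m ih =>
    rw [F_rec]
    calc F (m + 1) + 2 * F m + F (m + 1) = 2 * (F (m + 1) + F m) := by ring
    _ = 2 ^ (m + 2) := by rw [ih]; ring

theorem butterfly_binomial_identity (n : ℕ) (hn : 1 ≤ n) :
    2 ^ n = ∑ k ∈ Finset.range (n / 2 + 1),
      2 ^ k * (Nat.choose (n - k) k + Nat.choose (n - k - 1) k) := by
  obtain ⟨m, rfl⟩ : ∃ m, n = m + 1 := ⟨n - 1, by omega⟩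
  have hsplit : ∑ k ∈ Finset.range ((m + 1) / 2 + 1),
      2 ^ k * (Nat.choose (m + 1 - k) k + Nat.choose (m + 1 - k - 1) k)
      = (∑ k ∈ Finset.range ((m + 1) / 2 + 1), 2 ^ k * Nat.choose (m + 1 - k) k)
      + (∑ k ∈ Finset.range ((m + 1) / 2 + 1), 2 ^ k * Nat.choose (m - k) k) := by
    rw [← Finset.sum_add_distrib]
    apply Finset.sum_congr rfl
    intro k _
    have : m + 1 - k - 1 = m - k := by omega
    rw [this, Nat.mul_add]
  have h1 : (∑ k ∈ Finset.range ((m + 1) / 2 + 1), 2 ^ k * Nat.choose (m + 1 - k) k)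
      = F (m + 1) := by
    rw [F]
    apply Finset.sum_subset
    · intro k hk; simp at hk ⊢; omega
    · intro k _ hk
      simp only [Finset.mem_range] at hk
      rw [Nat.choose_eq_zero_of_lt (by omega), Nat.mul_zero]
  have h2 : (∑ k ∈ Finset.range ((m + 1) / 2 + 1), 2 ^ k * Nat.choose (m - k) k)
      = F m := by
    rw [F]
    apply Finset.sum_subset
    · intro k hk; simp at hk ⊢; omega
    · intro k _ hk
      simp only [Finset.mem_range] at hk
      rw [Nat.choose_eq_zero_of_lt (by omega), Nat.mul_zero]
  rw [hsplit, h1, h2, F_add]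
end

section
/- For every natural number m ≥ 1, 4^m = Σ_{k=0}^{m} 2^k · (C(2m−k, k) + C(2m−k−1, k)), where C denotes the binomial coefficient. -/
private def T (n : ℕ) : ℕ := ∑ k ∈ Finset.range (n + 1), 2 ^ k * Nat.choose (n - k) k

private lemma T_rec (n : ℕ) : T (n + 2) = T (n + 1) + 2 * T n := by
  unfold T
  rw [Finset.sum_range_succ' (fun k => 2 ^ k * Nat.choose (n + 2 - k) k),
      Finset.sum_range_succ' (fun k => 2 ^ k * Nat.choose (n + 1 - k) k)]
  have key : ∀ i ∈ Finset.range (n + 2),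
      2 ^ (i + 1) * Nat.choose (n + 2 - (i + 1)) (i + 1)
      = 2 ^ (i + 1) * Nat.choose (n - i) (i + 1) + 2 * (2 ^ i * Nat.choose (n - i) i) := by
    intro i _
    rcases le_or_gt i n with h | h
    · have h1 : n + 2 - (i + 1) = (n - i) + 1 := by omega
      rw [h1, Nat.choose_succ_succ]
      ring
    · have h1 : n + 2 - (i + 1) = n + 1 - i := by omega
      have h3 : n - i = 0 := by omega
      rw [h1, h3, Nat.choose_eq_zero_of_lt (show n + 1 - i < i + 1 by omega),
          Nat.choose_eq_zero_of_lt (show 0 < i + 1 by omega),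
          Nat.choose_eq_zero_of_lt (show 0 < i by omega)]
      simp
  rw [Finset.sum_congr rfl key, Finset.sum_add_distrib]
  have e1 : ∑ i ∈ Finset.range (n + 2), 2 ^ (i + 1) * Nat.choose (n - i) (i + 1)
      = ∑ i ∈ Finset.range (n + 1), 2 ^ (i + 1) * Nat.choose (n + 1 - (i + 1)) (i + 1) := by
    rw [Finset.sum_range_succ]
    have h0 : n - (n + 1) = 0 := by omega
    rw [h0, Nat.choose_eq_zero_of_lt (by omega)]
    simp [Nat.sub_sub]
  have e2 : ∑ i ∈ Finset.range (n + 2), 2 * (2 ^ i * Nat.choose (n - i) i)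
      = 2 * ∑ i ∈ Finset.range (n + 1), 2 ^ i * Nat.choose (n - i) i := by
    rw [Finset.sum_range_succ]
    have h0 : n - (n + 1) = 0 := by omega
    rw [h0, Nat.choose_eq_zero_of_lt (by omega), Finset.mul_sum]
    simp
  rw [e1, e2]
  simp only [Nat.choose_zero_right, mul_one, pow_zero]
  omega

private lemma pow_eq_T (m : ℕ) (hm : 1 ≤ m) : 4 ^ m = T (2 * m) + T (2 * m - 1) := by
  induction m with
  | zero => omega
  | succ n ih =>
    rcases Nat.eq_or_lt_of_le hm with h | h
    · simp [← h]
      decide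
    · have hn : 1 ≤ n := by omega
      have ihn := ih hn
      have r1 : T (2 * n + 2) = T (2 * n + 1) + 2 * T (2 * n) := T_rec _
      have r2 : T (2 * n + 1) = T (2 * n) + 2 * T (2 * n - 1) := by
        have h1 : 2 * n + 1 = (2 * n - 1) + 2 := by omega
        rw [h1, T_rec, show 2 * n - 1 + 1 = 2 * n by omega]
      rw [show 2 * (n + 1) - 1 = 2 * n + 1 by omega, show 2 * (n + 1) = 2 * n + 2 by ring,
          r1, r2]
      have h4 : 4 ^ (n + 1) = 4 * 4 ^ n := by ring
      rw [h4, ihn]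
      ring

theorem butterfly_binomial_identity_even (m : ℕ) (hm : 1 ≤ m) :
    4 ^ m = ∑ k ∈ Finset.range (m + 1),
      2 ^ k * (Nat.choose (2 * m - k) k + Nat.choose (2 * m - k - 1) k) := by
  have split : ∑ k ∈ Finset.range (m + 1),
      2 ^ k * (Nat.choose (2 * m - k) k + Nat.choose (2 * m - k - 1) k)
      = (∑ k ∈ Finset.range (m + 1), 2 ^ k * Nat.choose (2 * m - k) k)
      + (∑ k ∈ Finset.range (m + 1), 2 ^ k * Nat.choose (2 * m - k - 1) k) := by
    rw [← Finset.sum_add_distrib]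
    exact Finset.sum_congr rfl fun k _ => by ring
  have e1 : ∑ k ∈ Finset.range (m + 1), 2 ^ k * Nat.choose (2 * m - k) k = T (2 * m) := by
    unfold T
    refine Finset.sum_subset (Finset.range_subset_range.2 (by omega)) ?_
    intro k hk hk'
    simp only [Finset.mem_range] at hk hk'
    rw [Nat.choose_eq_zero_of_lt (by omega), mul_zero]
  have e2 : ∑ k ∈ Finset.range (m + 1), 2 ^ k * Nat.choose (2 * m - k - 1) k
      = T (2 * m - 1) := by
    unfold T
    rw [show 2 * m - 1 + 1 = 2 * m by omega]
    refine (Finset.sum_congr rfl fun k _ => ?_).trans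
      (Finset.sum_subset (Finset.range_subset_range.2 (show m + 1 ≤ 2 * m by omega))
        fun k hk hk' => ?_)
    · have hkk : 2 * m - k - 1 = 2 * m - 1 - k := by omega
      rw [hkk]
    · simp only [Finset.mem_range] at hk hk'
      rw [Nat.choose_eq_zero_of_lt (by omega), mul_zero]
  rw [split, e1, e2]
  exact pow_eq_T m hm
end

section
/- Let x ∈ {0,1}^n and define y ∈ {0,1}^{n-1} by y_j = xor(x_{j+1}, x_j). Define HS(x) = Σ_j X_j where X_1 = 0 and X_j = xor(x_j, x_{j-1})·(1 − X_{j-1}). If the maximal runs of 1s in y have lengths k_1, …, k_ℓ, then HS(x) = Σ_{i=1}^ℓ ⌈k_i/2⌉. -/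
def runLengthsAux : List ℕ → ℕ → List ℕ
  | [], acc => if acc = 0 then [] else [acc]
  | b :: t, acc =>
      if b = 1 then runLengthsAux t (acc + 1)
      else if acc = 0 then runLengthsAux t 0 else acc :: runLengthsAux t 0

def runLengths (l : List ℕ) : List ℕ := runLengthsAux l 0

def Sfun : List ℕ → ℕ → ℕ
  | [], _ => 0
  | b :: t, s => b * (1 - s) + Sfun t (b * (1 - s))

lemma run_lemma : ∀ l : List ℕ, (∀ b ∈ l, b ≤ 1) → ∀ acc,
    Sfun l (acc % 2) + (acc + 1) / 2
      = ((runLengthsAux l acc).map (fun k => (k + 1) / 2)).sum := by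
  intro l
  induction l with
  | nil =>
      intro _ acc
      simp only [Sfun, runLengthsAux]
      split_ifs with h <;> simp <;> omega
  | cons b t ih =>
      intro hb acc
      have hb1 : b ≤ 1 := hb b (by simp)
      have ht : ∀ c ∈ t, c ≤ 1 := fun c hc => hb c (by simp [hc])
      interval_cases b
      · have h0 := ih ht 0
        norm_num at h0
        show 0 * (1 - acc % 2) + Sfun t (0 * (1 - acc % 2)) + (acc + 1) / 2 = _
        simp only [Nat.zero_mul, Nat.zero_add]
        by_cases h : acc = 0
        · subst h
          rw [show runLengthsAux (0 :: t) 0 = runLengthsAux t 0 from by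
            simp [runLengthsAux]]
          omega
        · rw [show runLengthsAux (0 :: t) acc = acc :: runLengthsAux t 0 from by
            simp [runLengthsAux, h]]
          simp only [List.map_cons, List.sum_cons]
          omega
      · have h1 := ih ht (acc + 1)
        rw [show runLengthsAux (1 :: t) acc = runLengthsAux t (acc + 1) from by
          simp [runLengthsAux]]
        show 1 * (1 - acc % 2) + Sfun t (1 * (1 - acc % 2)) + (acc + 1) / 2 = _
        rw [show 1 * (1 - acc % 2) = (acc + 1) % 2 from by omega]
        omega

lemma sumX : ∀ (m : ℕ) (f X : ℕ → ℕ),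
    (∀ j, 2 ≤ j → X j = f j * (1 - X (j - 1))) →
    ∑ j ∈ Finset.Icc 2 (m + 1), X j
      = Sfun (List.ofFn (fun i : Fin m => f (i.val + 2))) (X 1) := by
  intro m
  induction m with
  | zero => intro f X hX; simp [Sfun]
  | succ m ih =>
      intro f X hX
      have h2 : X 2 = f 2 * (1 - X 1) := by simpa using hX 2 le_rfl
      have key := ih (fun j => f (j + 1)) (fun j => X (j + 1))
        (fun j hj => by
          have h := hX (j + 1) (by omega)
          rw [show j + 1 - 1 = j from by omega] at h
          show X (j + 1) = f (j + 1) * (1 - X (j - 1 + 1))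
          rw [show j - 1 + 1 = j from by omega]
          exact h)
      rw [List.ofFn_succ]
      simp only [Sfun, Fin.val_succ, Fin.val_zero, Nat.zero_add]
      have hsplit : Finset.Icc 2 (m + 1 + 1) = insert 2 (Finset.Icc 3 (m + 2)) := by
        ext j; simp [Finset.mem_Icc]; omega
      rw [hsplit, Finset.sum_insert (by simp [Finset.mem_Icc])]
      have hmap : ∑ j ∈ Finset.Icc 3 (m + 2), X j
          = ∑ j ∈ Finset.Icc 2 (m + 1), X (j + 1) := by
        have h := Finset.sum_map (Finset.Icc 2 (m + 1)) (addRightEmbedding 1) X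
        rw [Finset.map_add_right_Icc] at h
        simpa using h
      rw [hmap, key]
      rw [← h2]

theorem HS_eq_sum_ceil_half_runs
    (n : ℕ) (hn : 1 ≤ n) (x X : ℕ → ℕ) (hx : ∀ j, x j ≤ 1)
    (hX1 : X 1 = 0)
    (hXrec : ∀ j : ℕ, 2 ≤ j → X j = ((x j + x (j - 1)) % 2) * (1 - X (j - 1))) :
    ∑ j ∈ Finset.Icc 1 n, X j =
      ((runLengths (List.ofFn (fun j : Fin (n - 1) =>
          (x (j.val + 2) + x (j.val + 1)) % 2))).map (fun k => (k + 1) / 2)).sum := by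
  obtain ⟨m, rfl⟩ : ∃ m, n = m + 1 := ⟨n - 1, by omega⟩
  have hsplit : Finset.Icc 1 (m + 1) = insert 1 (Finset.Icc 2 (m + 1)) := by
    ext j; simp [Finset.mem_Icc]; omega
  rw [hsplit, Finset.sum_insert (by simp [Finset.mem_Icc]), hX1, Nat.zero_add]
  have hs := sumX m (fun j => (x j + x (j - 1)) % 2) X hXrec
  rw [hs, hX1]
  have hrun := run_lemma
    (List.ofFn (fun i : Fin m => (x (i.val + 2) + x (i.val + 2 - 1)) % 2))
    (by intro b hb; simp [List.mem_ofFn] at hb; obtain ⟨i, hi⟩ := hb; omega) 0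
  simp only [Nat.zero_mod] at hrun
  rw [show (0 + 1) / 2 = 0 from by norm_num, Nat.add_zero] at hrun
  rw [runLengths]
  simp only [Nat.add_sub_cancel]
  exact hrun
end

section
/- Let x ∈ {0,1}^n and let rev(x) be its reversal (rev(x)_j = x_{n−j+1}). Then HS(x) = HS(rev(x)), where HS(x) = Σ_j X_j with X_1 = 0 and X_j = xor(x_j, x_{j-1})·(1 − X_{j-1}). -/
/-- The Horton–Strahler increment sequence of the simple butterfly tree encoded by the
bitstring `x` (indexed from 1): `X 1 = 0` and `X j = xor(x j, x (j-1)) * (1 - X (j-1))`. -/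
def hsInc (x : ℕ → ℕ) : ℕ → ℕ
  | 0 => 0
  | 1 => 0
  | n + 2 => ((x (n + 2) + x (n + 1)) % 2) * (1 - hsInc x (n + 1))

/-- The Horton–Strahler number of the simple butterfly tree encoded by the length-`n`
bitstring `x` (entries `x 1, …, x n`). -/
def HS (x : ℕ → ℕ) (n : ℕ) : ℕ := ∑ j ∈ Finset.Icc 1 n, hsInc x j

/-- Run the HS increment recursion over a list of xor-differences, starting from state `p`.
Returns (total sum, final state). -/
def hsRun (p : ℕ) : List ℕ → ℕ × ℕ
  | [] => (0, p)
  | b :: t =>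
    let r := hsRun (b * (1 - p)) t
    (b * (1 - p) + r.1, r.2)

lemma hsRun_append (p : ℕ) (l m : List ℕ) :
    hsRun p (l ++ m) =
      ((hsRun p l).1 + (hsRun (hsRun p l).2 m).1, (hsRun (hsRun p l).2 m).2) := by
  induction l generalizing p with
  | nil => simp [hsRun]
  | cons b t ih => simp [hsRun, ih, add_assoc]

lemma hsRun_snd_le (p : ℕ) (l : List ℕ) (hp : p ≤ 1) (hl : ∀ a ∈ l, a ≤ 1) :
    (hsRun p l).2 ≤ 1 := by
  induction l generalizing p with
  | nil => simpa [hsRun] using hp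
  | cons b t ih =>
    simp only [hsRun]
    exact ih _ (le_trans (Nat.mul_le_mul (hl b (by simp)) (Nat.sub_le 1 p)) (by norm_num))
      (fun a ha => hl a (by simp [ha]))

theorem hsRun_reverse : ∀ l : List ℕ, (∀ a ∈ l, a ≤ 1) → (hsRun 0 l.reverse).1 = (hsRun 0 l).1
  | [], _ => rfl
  | [a], _ => by simp [hsRun]
  | a :: b :: t, h => by
    have ha : a ≤ 1 := h a (by simp)
    have hb : b ≤ 1 := h b (by simp)
    have ht : ∀ c ∈ t, c ≤ 1 := fun c hc => h c (by simp [hc])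
    have hbt : ∀ c ∈ b :: t, c ≤ 1 := fun c hc => h c (by simp at hc ⊢; tauto)
    interval_cases a
    · -- a = 0
      have ih := hsRun_reverse (b :: t) hbt
      rw [show ((0:ℕ) :: b :: t).reverse = (b :: t).reverse ++ [0] by simp]
      rw [hsRun_append]
      simp [hsRun] at ih ⊢
      omega
    · -- a = 1
      have ih := hsRun_reverse t ht
      rw [show ((1:ℕ) :: b :: t).reverse = t.reverse ++ [b, 1] by simp]
      rw [hsRun_append]
      have hs : (hsRun 0 t.reverse).2 ≤ 1 := hsRun_snd_le 0 t.reverse (by norm_num)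
        (fun a ha => ht a (by simpa using ha))
      set s := (hsRun 0 t.reverse).2 with hs_def
      have hq : b * (1 - s) ≤ 1 := le_trans (Nat.mul_le_mul hb (Nat.sub_le 1 s)) (by norm_num)
      simp [hsRun] at ih ⊢
      omega

/-- the list of xor-differences for a bitstring of length `n + 1` -/
def hsList (x : ℕ → ℕ) (n : ℕ) : List ℕ :=
  (List.range n).map fun i => (x (i + 2) + x (i + 1)) % 2

lemma hsRun_hsList (x : ℕ → ℕ) : ∀ n, hsRun 0 (hsList x n) = (HS x (n + 1), hsInc x (n + 1))
  | 0 => by simp [hsList, hsRun, HS, hsInc]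
  | n + 1 => by
    have ih := hsRun_hsList x n
    have hl : hsList x (n + 1) = hsList x n ++ [(x (n + 2) + x (n + 1)) % 2] := by
      simp [hsList, List.range_succ]
    rw [hl, hsRun_append, ih]
    have hHS : HS x (n + 2) = HS x (n + 1) + hsInc x (n + 2) := by
      rw [HS, HS, Finset.sum_Icc_succ_top (by omega)]
    simp [hsRun, hsInc, hHS]

lemma hsList_reverse (x : ℕ → ℕ) (m : ℕ) :
    hsList (fun j => x (m + 1 - j + 1)) m = (hsList x m).reverse := by
  apply List.ext_getElem
  · simp [hsList]
  · intro i h1 h2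
    have hi : i < m := by simpa [hsList] using h1
    rw [List.getElem_reverse]
    simp only [hsList, List.getElem_map, List.getElem_range, List.length_map,
      List.length_range]
    have e1 : m + 1 - (i + 2) + 1 = m - i := by omega
    have e2 : m + 1 - (i + 1) + 1 = m + 1 - i := by omega
    have e3 : m - 1 - i + 2 = m + 1 - i := by omega
    have e4 : m - 1 - i + 1 = m - i := by omega
    rw [e1, e2, e3, e4, Nat.add_comm]

theorem HS_reversal_invariance (n : ℕ) (x : ℕ → ℕ) (hx : ∀ j, x j ≤ 1) :
    HS x n = HS (fun j => x (n - j + 1)) n := by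
  cases n with
  | zero => simp [HS]
  | succ m =>
    have h1 := hsRun_hsList x m
    have h2 := hsRun_hsList (fun j => x (m + 1 - j + 1)) m
    have h3 := hsList_reverse x m
    have hle : ∀ a ∈ hsList x m, a ≤ 1 := by
      intro a ha
      simp [hsList] at ha
      obtain ⟨i, _, rfl⟩ := ha
      omega
    have h4 := hsRun_reverse (hsList x m) hle
    rw [h3] at h2
    have h5 : (hsRun 0 (hsList x m).reverse).1 = (hsRun 0 (hsList x m)).1 := h4
    rw [h1, h2] at h5
    exact h5.symm
end

section
/- Let p ∈ (0,1), q = 1−p, and let P be the 8×8 stochastic matrix with rows indexed by states (a,b,c) ∈ {0,1}^3 (encoded k = 4a+2b+c+1) and transitions (a,b,c) → (ξ, a, xor(a,b)·(1−c)) where ξ = 1 with probability p and ξ = 0 with probability q. Then the row vector π = (1/(1−pq)) · [q³, p²q², p²q, pq³, pq², p³q, p³, p²q²] satisfies πP = π and its entries sum to 1. -/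
set_option maxHeartbeats 2000000

private lemma vec8_five {α : Type*} (a b c d e f g h : α) :
    (![a,b,c,d,e,f,g,h] : Fin 8 → α) 5 = f := rfl

private lemma vec8_six {α : Type*} (a b c d e f g h : α) :
    (![a,b,c,d,e,f,g,h] : Fin 8 → α) 6 = g := rfl

private lemma vec8_seven {α : Type*} (a b c d e f g h : α) :
    (![a,b,c,d,e,f,g,h] : Fin 8 → α) 7 = h := rfl


theorem butterfly_chain_stationary (p : ℝ) (hp : p ∈ Set.Ioo (0 : ℝ) 1) :
    let q : ℝ := 1 - p
    let P : Matrix (Fin 8) (Fin 8) ℝ :=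
      !![q, 0, 0, 0, p, 0, 0, 0;
         q, 0, 0, 0, p, 0, 0, 0;
         0, q, 0, 0, 0, p, 0, 0;
         q, 0, 0, 0, p, 0, 0, 0;
         0, 0, 0, q, 0, 0, 0, p;
         0, 0, q, 0, 0, 0, p, 0;
         0, 0, q, 0, 0, 0, p, 0;
         0, 0, q, 0, 0, 0, p, 0]
    let π : Fin 8 → ℝ := (1 / (1 - p * q)) •
      ![q ^ 3, p ^ 2 * q ^ 2, p ^ 2 * q, p * q ^ 3, p * q ^ 2, p ^ 3 * q, p ^ 3, p ^ 2 * q ^ 2]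
    Matrix.vecMul π P = π ∧ ∑ i, π i = 1 := by
  intro q P π
  obtain ⟨hp0, hp1⟩ := hp
  have hq : (1 : ℝ) - p * q ≠ 0 := by
    simp only [q]; nlinarith
  constructor
  · funext i
    fin_cases i <;>
      simp [π, P, q, Matrix.vecMul, dotProduct, Fin.sum_univ_succ, vec8_five, vec8_six, vec8_seven] <;>
      field_simp <;> ring
  · simp only [π, q, Fin.sum_univ_eight, Pi.smul_apply, smul_eq_mul,
      Matrix.cons_val_zero, Matrix.cons_val_one, Matrix.head_cons, Matrix.cons_val_two,
      Matrix.tail_cons, Matrix.cons_val_three, Matrix.cons_val_four, vec8_five, vec8_six,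
      vec8_seven]
    have hq' : (1:ℝ) - p * (1 - p) ≠ 0 := by nlinarith
    field_simp
    ring
end
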